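/- arXiv:2312.07793 — 2 statements merged into one kernel-verified Lean document; each statement's English description precedes it below -/
import Mathlib

section
/- Let (X,T) and (Y,S) be dynamical systems with metrics d on X and d′ on Y. For any equivariant continuous map π : (X,T) → (Y,S) we have lmdimm(π,T,d) = liminf_{ε→0} { lim_{δ→0} ( lim_{N→∞} [sup_{y∈Y} log #(π^{-1}(B_δ(y, d′_N)), d_N, ε)] / (N log(1/ε)) ) }. -/
open Filter Topology Pointwise ENNReal
open scoped ENat

noncomputable section

/-- The diameter of a set with respect to a distance function, valued in `ℝ≥0∞`. -/
def setDiam {X : Type*} (d : X → X → ℝ) (A : Set X) : ℝ≥0∞ :=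
  ⨆ x ∈ A, ⨆ y ∈ A, ENNReal.ofReal (d x y)

/-- `coverNum d A ε` is the minimal number of relatively open subsets of `A` of
`d`-diameter `< ε` needed to cover `A` (it is `0` if `A = ∅`). -/
def coverNum {X : Type*} [TopologicalSpace X] (d : X → X → ℝ) (A : Set X) (ε : ℝ) : ℕ :=
  sInf {n : ℕ | ∃ U : Fin n → Set X, (∀ i, IsOpen (U i)) ∧ A ⊆ (⋃ i, U i) ∧
    ∀ i, setDiam d (U i ∩ A) < ENNReal.ofReal ε}

/-- The dynamical (Bowen) metric `d_N(x,y) = max_{0 ≤ n < N} d(Tⁿx, Tⁿy)`. -/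
def dynDist {X : Type*} (T : X → X) (d : X → X → ℝ) (N : ℕ) (x y : X) : ℝ :=
  ⨆ n : Fin N, d (T^[(n : ℕ)] x) (T^[(n : ℕ)] y)

/-- `widimEps X d ε` is the minimal `n` such that there is a finite simplicial complex of
dimension (at most) `n` and an `ε`-embedding from `X` into it. -/
def widimEps (X : Type*) [TopologicalSpace X] (d : X → X → ℝ) (ε : ℝ) : ℕ∞ :=
  sInf {n : ℕ∞ | ∃ m : ℕ, n = (m : ℕ∞) ∧
    ∃ (k : ℕ) (K : Geometry.SimplicialComplex ℝ (Fin k → ℝ)), K.faces.Finite ∧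
      (∀ s ∈ K.faces, s.card ≤ m + 1) ∧
      ∃ f : X → K.space, Continuous f ∧
        ∀ p : K.space, setDiam d (f ⁻¹' {p}) < ENNReal.ofReal ε}

/-- The topological dimension `dim X = lim_{ε → 0} widim_ε(X, d)`. -/
def topDim (X : Type*) [TopologicalSpace X] (d : X → X → ℝ) : ℕ∞ :=
  limsup (fun ε : ℝ => widimEps X d ε) (𝓝[>] 0)

/-- The mean dimension `mdim(X,T) = lim_{ε→0} lim_{N→∞} widim_ε(X, d_N)/N`. -/
def meanDim (X : Type*) [TopologicalSpace X] (T : X → X) (d : X → X → ℝ) : EReal :=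
  limsup (fun ε : ℝ =>
    limsup (fun N : ℕ =>
      (((widimEps X (dynDist T d N) ε : ℕ∞) : ℝ≥0∞) : EReal) / (N : EReal)) atTop)
    (𝓝[>] 0)

/-- `sup_{y ∈ Y} log #(π⁻¹(y), d_N, ε)`. -/
def fiberLogCover {X Y : Type*} [TopologicalSpace X] (T : X → X) (d : X → X → ℝ)
    (π : X → Y) (ε : ℝ) (N : ℕ) : EReal :=
  ⨆ y : Y, ((Real.log (coverNum (dynDist T d N) (π ⁻¹' {y}) ε) : ℝ) : EReal)

/-- The lower conditional metric mean dimension `lmdimm(π, T, d)`. -/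
def condMetricMeanDim {X Y : Type*} [TopologicalSpace X] (T : X → X) (d : X → X → ℝ)
    (π : X → Y) : EReal :=
  liminf (fun ε : ℝ =>
    limsup (fun N : ℕ =>
      fiberLogCover T d π ε N / ((N : EReal) * ((Real.log (1/ε) : ℝ) : EReal))) atTop)
    (𝓝[>] 0)

/-- The topological conditional entropy `h_top(π, T)`. -/
def condEntropy {X Y : Type*} [TopologicalSpace X] (T : X → X) (d : X → X → ℝ)
    (π : X → Y) : EReal :=
  limsup (fun ε : ℝ =>
    limsup (fun N : ℕ => fiberLogCover T d π ε N / (N : EReal)) atTop) (𝓝[>] 0)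

/-- The topological entropy `h_top(X, T)`. -/
def topEntropy (X : Type*) [TopologicalSpace X] (T : X → X) (d : X → X → ℝ) : EReal :=
  limsup (fun ε : ℝ =>
    limsup (fun N : ℕ =>
      ((Real.log (coverNum (dynDist T d N) Set.univ ε) : ℝ) : EReal) / (N : EReal)) atTop)
    (𝓝[>] 0)

/-- The lower metric mean dimension `lmdimm(X, T, d)`. -/
def metricMeanDim (X : Type*) [TopologicalSpace X] (T : X → X) (d : X → X → ℝ) : EReal :=
  liminf (fun ε : ℝ =>
    limsup (fun N : ℕ =>
      ((Real.log (coverNum (dynDist T d N) Set.univ ε) : ℝ) : EReal) /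
        ((N : EReal) * ((Real.log (1/ε) : ℝ) : EReal))) atTop)
    (𝓝[>] 0)

/-- The cube `[0,1]^a ⊆ ℝ^a`, where `ℝ^a` carries the max-norm. -/
abbrev Cube (a : ℕ) : Set (Fin a → ℝ) := Set.Icc 0 1

/-- The full shift `([0,1]^a)^ℤ`. -/
abbrev FullShift (a : ℕ) := ℤ → Cube a

/-- The shift map `σ` on `([0,1]^a)^ℤ`. -/
def shiftMap (a : ℕ) : FullShift a → FullShift a := fun x n => x (n + 1)

/-- The metric `D((xₙ), (yₙ)) = Σ_{n ∈ ℤ} 2^{-|n|} ‖xₙ - yₙ‖_∞` on the full shift. -/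
def shiftDist (a : ℕ) (x y : FullShift a) : ℝ :=
  ∑' n : ℤ, (2 : ℝ) ^ (-|n|) * ‖(x n : Fin a → ℝ) - (y n : Fin a → ℝ)‖


/-- A simplicial (i.e. face-wise affine) map on a simplicial complex `K`. -/
def IsSimplicialMap {E F : Type*} [AddCommGroup E] [Module ℝ E] [AddCommGroup F] [Module ℝ F]
    (K : Geometry.SimplicialComplex ℝ E) (g : E → F) : Prop :=
  ∀ s ∈ K.faces, ∀ w : E → ℝ, (∀ v ∈ s, 0 ≤ w v) → (∑ v ∈ s, w v) = 1 →
    g (∑ v ∈ s, w v • v) = ∑ v ∈ s, w v • g v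

/-- The projection `[0,1]^a → [0,1]^b` onto the first `b` coordinates (for `b ≤ a`). -/
def projCube {a b : ℕ} (h : b ≤ a) (x : Cube a) : Cube b :=
  ⟨fun i => (x : Fin a → ℝ) (Fin.castLE h i),
    ⟨fun i => x.2.1 (Fin.castLE h i), fun i => x.2.2 (Fin.castLE h i)⟩⟩

/-!
For fixed `ε`, fibres lie in preimages of dynamical balls, so each fibre term is at most the
corresponding `δ`-term. Conversely, fix `m` and let `M` be the largest `#(π⁻¹(y), d_m, ε)`. An
optimal cover of a fibre, slightly shrunk, still covers the preimage of a neighbourhood of its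
base point with pieces of diameter `< ε` (`π` is a closed map), and a Lebesgue number of these
neighbourhoods gives one `δ > 0` such that every `π⁻¹(B_δ(y))` needs at most `M` pieces. Cutting
`[0, N)` into `N / m + 1` windows of length `m`, equivariance sends `π⁻¹(B_δ(y, d'_N))` into such
preimages at the start of each window, so it is covered by `M ^ (N / m + 1)` sets of
`d_N`-diameter `< ε`. Hence the `δ`-term is at most `log M / (m log (1/ε))` for every `m`, so at
most the liminf over `m` of the fibre terms.
-/

open Function Set Metric

section SetDiam

variable {X : Type*} {d : X → X → ℝ} {A B : Set X}

lemma ofReal_le_setDiam {x y : X} (hx : x ∈ A) (hy : y ∈ A) :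
    ENNReal.ofReal (d x y) ≤ setDiam d A :=
  le_iSup₂_of_le x hx (le_iSup₂_of_le y hy le_rfl)

lemma setDiam_mono (h : A ⊆ B) : setDiam d A ≤ setDiam d B :=
  iSup₂_le fun _ hx => iSup₂_le fun _ hy => ofReal_le_setDiam (h hx) (h hy)

lemma setDiam_le_ofReal {r : ℝ} (h : ∀ x ∈ A, ∀ y ∈ A, d x y ≤ r) :
    setDiam d A ≤ ENNReal.ofReal r :=
  iSup₂_le fun x hx => iSup₂_le fun y hy => ENNReal.ofReal_le_ofReal (h x hx y hy)

lemma lt_of_setDiam_lt {x y : X} {r : ℝ} (hx : x ∈ A) (hy : y ∈ A)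
    (h : setDiam d A < ENNReal.ofReal r) : d x y < r :=
  (ENNReal.ofReal_lt_ofReal_iff'.1 ((ofReal_le_setDiam hx hy).trans_lt h)).1

end SetDiam

lemma Real.log_natCast_le_log_natCast {m n : ℕ} (h : m ≤ n) : Real.log m ≤ Real.log n := by
  rcases m.eq_zero_or_pos with rfl | hm
  · simpa using Real.log_natCast_nonneg n
  · exact Real.log_le_log (by exact_mod_cast hm) (by exact_mod_cast h)

lemma limsup_div_natCast_mul_le {u : ℕ → EReal} {m : ℕ} (hm : 0 < m) {r c : ℝ} (hr : 0 ≤ r)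
    (hc : 0 < c) (hu : ∀ N ≥ m, u N ≤ ((((N / m + 1 : ℕ) : ℝ) * r : ℝ) : EReal)) :
    limsup (fun N : ℕ => u N / ((N : EReal) * (c : EReal))) atTop ≤
      (r : EReal) / ((m : EReal) * (c : EReal)) := by
  have hlim : Tendsto (fun N : ℕ => ((r / (m * c) + r / c / N : ℝ) : EReal)) atTop
      (𝓝 ((r / (m * c) : ℝ) : EReal)) :=
    EReal.tendsto_coe.2 <| by
      simpa using (tendsto_const_nhds (x := r / (m * c))).add
        (tendsto_const_div_atTop_nhds_zero_nat (r / c))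
  have hbound : ∀ᶠ N : ℕ in atTop,
      u N / ((N : EReal) * (c : EReal)) ≤ ((r / (m * c) + r / c / N : ℝ) : EReal) := by
    filter_upwards [eventually_ge_atTop m] with N hN
    have hN0 : (0 : ℝ) < N := by exact_mod_cast hm.trans_le hN
    have hreal : ((N / m + 1 : ℕ) : ℝ) * r / (N * c) ≤ r / (m * c) + r / c / N :=
      calc ((N / m + 1 : ℕ) : ℝ) * r / (N * c) ≤ ((N : ℝ) / m + 1) * r / (N * c) := by
            gcongr
            push_cast
            gcongr
            exact Nat.cast_div_le
        _ = r / (m * c) + r / c / N := by field_simp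
    rw [← EReal.coe_coe_eq_natCast, ← EReal.coe_mul]
    refine (EReal.div_le_div_right_of_nonneg (EReal.coe_nonneg.2 (by positivity))
      (hu N hN)).trans ?_
    rw [← EReal.coe_div]
    exact EReal.coe_le_coe_iff.2 hreal
  calc limsup (fun N : ℕ => u N / ((N : EReal) * (c : EReal))) atTop
      ≤ limsup (fun N : ℕ => ((r / (m * c) + r / c / N : ℝ) : EReal)) atTop :=
        limsup_le_limsup hbound
    _ = (r : EReal) / ((m : EReal) * (c : EReal)) := by
        rw [hlim.limsup_eq, EReal.coe_div, EReal.coe_mul, EReal.coe_coe_eq_natCast]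

section CoverNum

variable {X : Type*} [TopologicalSpace X] {d : X → X → ℝ} {A B : Set X} {ε : ℝ}

/-- `coverNum d A ε` is the `sInf` of this set, hence `0` when it is empty: that is why
monotonicity and optimal covers need it to be nonempty. -/
def coverCards (d : X → X → ℝ) (A : Set X) (ε : ℝ) : Set ℕ :=
  {n : ℕ | ∃ U : Fin n → Set X, (∀ i, IsOpen (U i)) ∧ A ⊆ (⋃ i, U i) ∧
    ∀ i, setDiam d (U i ∩ A) < ENNReal.ofReal ε}

lemma card_mem_coverCards {ι : Type*} [Fintype ι] (U : ι → Set X) (hU : ∀ i, IsOpen (U i))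
    (hAU : A ⊆ ⋃ i, U i) (hdiam : ∀ i, setDiam d (U i ∩ A) < ENNReal.ofReal ε) :
    Fintype.card ι ∈ coverCards d A ε := by
  let e := Fintype.equivFin ι
  refine ⟨U ∘ e.symm, fun _ => hU _, hAU.trans ?_, fun _ => hdiam _⟩
  exact iUnion_subset fun i => subset_iUnion_of_subset (e i) (by simp)

lemma coverNum_le_card {ι : Type*} [Fintype ι] (U : ι → Set X) (hU : ∀ i, IsOpen (U i))
    (hAU : A ⊆ ⋃ i, U i) (hdiam : ∀ i, setDiam d (U i ∩ A) < ENNReal.ofReal ε) :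
    coverNum d A ε ≤ Fintype.card ι :=
  Nat.sInf_le (card_mem_coverCards U hU hAU hdiam)

lemma exists_cover_of_coverCards_nonempty (h : (coverCards d A ε).Nonempty) :
    ∃ U : Fin (coverNum d A ε) → Set X, (∀ i, IsOpen (U i)) ∧ A ⊆ ⋃ i, U i ∧
      ∀ i, setDiam d (U i ∩ A) < ENNReal.ofReal ε :=
  Nat.sInf_mem h

lemma coverNum_mono (hAB : A ⊆ B) (hB : (coverCards d B ε).Nonempty) :
    coverNum d A ε ≤ coverNum d B ε := by
  obtain ⟨U, hU, hBU, hdiam⟩ := exists_cover_of_coverCards_nonempty hB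
  simpa using coverNum_le_card U hU (hAB.trans hBU)
    fun i => (setDiam_mono (inter_subset_inter_right _ hAB)).trans_lt (hdiam i)

lemma log_coverNum_mono (hAB : A ⊆ B) (hB : (coverCards d B ε).Nonempty) :
    Real.log (coverNum d A ε) ≤ Real.log (coverNum d B ε) :=
  Real.log_natCast_le_log_natCast (coverNum_mono hAB hB)

lemma coverCards_nonempty [CompactSpace X] (hd : Continuous (uncurry d)) (hd0 : ∀ x, d x x = 0)
    (hε : 0 < ε) (A : Set X) : (coverCards d A ε).Nonempty := by
  have hsmall : ∀ x, ∃ V ∈ 𝓝 x, ∀ y ∈ V, ∀ z ∈ V, d y z < ε / 2 := fun x => by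
    have : {p : X × X | d p.1 p.2 < ε / 2} ∈ 𝓝 x ×ˢ 𝓝 x := by
      rw [← nhds_prod_eq]
      exact (isOpen_lt hd continuous_const).mem_nhds (by simp [hd0, hε])
    obtain ⟨V, hV, hVV⟩ := mem_prod_self_iff.1 this
    exact ⟨V, hV, fun y hy z hz => hVV (mk_mem_prod hy hz)⟩
  choose V hV hVsmall using hsmall
  obtain ⟨t, -, ht⟩ := isCompact_univ.elim_nhds_subcover (fun x => interior (V x))
    fun x _ => interior_mem_nhds.2 (hV x)
  refine ⟨_, card_mem_coverCards (fun x : t => interior (V x)) (fun _ => isOpen_interior)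
    (fun y _ => ?_) fun x => ?_⟩
  · obtain ⟨x, hx, hy⟩ := mem_iUnion₂.1 (ht (mem_univ y))
    exact mem_iUnion.2 ⟨⟨x, hx⟩, hy⟩
  · refine (setDiam_le_ofReal fun y hy z hz =>
      (hVsmall x y (interior_subset hy.1) z (interior_subset hz.1)).le).trans_lt ?_
    exact (ENNReal.ofReal_lt_ofReal_iff hε).2 (half_lt_self hε)

lemma coverNum_le_prod {ι : Type*} [Fintype ι] [Nonempty ι] {ρ : ι → X → X → ℝ}
    {B : ι → Set X} (f : ι → X → X) (hf : ∀ j, Continuous (f j))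
    (hAB : ∀ j, MapsTo (f j) A (B j))
    (hdom : ∀ x ∈ A, ∀ y ∈ A, ∃ j, d x y ≤ ρ j (f j x) (f j y))
    (hB : ∀ j, (coverCards (ρ j) (B j) ε).Nonempty) :
    coverNum d A ε ≤ ∏ j, coverNum (ρ j) (B j) ε := by
  classical
  choose U hU hBU hdiam using fun j => exists_cover_of_coverCards_nonempty (hB j)
  refine (coverNum_le_card
    (fun σ : ∀ j, Fin (coverNum (ρ j) (B j) ε) => ⋂ j, f j ⁻¹' U j (σ j))
    (fun σ => isOpen_iInter_of_finite fun j => (hU j _).preimage (hf j)) ?_ ?_).trans_eq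
      (by simp)
  · intro x hx
    choose σ hσ using fun j => mem_iUnion.1 (hBU j (hAB j hx))
    exact mem_iUnion.2 ⟨σ, mem_iInter.2 hσ⟩
  · intro σ
    obtain ⟨j₀, hj₀⟩ := Finite.exists_max fun j => setDiam (ρ j) (U j (σ j) ∩ B j)
    refine lt_of_le_of_lt (iSup₂_le fun x hx => iSup₂_le fun y hy => ?_) (hdiam j₀ (σ j₀))
    obtain ⟨j, hj⟩ := hdom x hx.2 y hy.2
    calc ENNReal.ofReal (d x y) ≤ ENNReal.ofReal (ρ j (f j x) (f j y)) :=
          ENNReal.ofReal_le_ofReal hj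
      _ ≤ setDiam (ρ j) (U j (σ j) ∩ B j) :=
          ofReal_le_setDiam ⟨mem_iInter.1 hx.1 j, hAB j hx.2⟩ ⟨mem_iInter.1 hy.1 j, hAB j hy.2⟩
      _ ≤ _ := hj₀ j

lemma exists_coverNum_fiber_max {Y : Type*} [Nonempty Y] [CompactSpace X]
    (hd : Continuous (uncurry d)) (hd0 : ∀ x, d x x = 0) (hε : 0 < ε) (π : X → Y) :
    ∃ y₀, ∀ y, coverNum d (π ⁻¹' {y}) ε ≤ coverNum d (π ⁻¹' {y₀}) ε := by
  have hbdd : BddAbove (range fun y => coverNum d (π ⁻¹' {y}) ε) :=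
    ⟨coverNum d univ ε, forall_mem_range.2 fun _ =>
      coverNum_mono (subset_univ _) (coverCards_nonempty hd hd0 hε _)⟩
  obtain ⟨y₀, hy₀⟩ := Nat.sSup_mem (range_nonempty _) hbdd
  exact ⟨y₀, fun y => (le_csSup hbdd (mem_range_self y)).trans_eq hy₀.symm⟩

end CoverNum

section Fiber

variable {X Y : Type*} [TopologicalSpace X] [CompactSpace X] [T2Space X] {d : X → X → ℝ}
  {π : X → Y} {ε : ℝ}

lemma exists_nhds_coverNum_preimage_le [TopologicalSpace Y] [T2Space Y]
    (hd : Continuous (uncurry d)) (hd0 : ∀ x, d x x = 0) (hε : 0 < ε) (hπ : Continuous π)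
    (y₀ : Y) : ∃ O ∈ 𝓝 y₀, coverNum d (π ⁻¹' O) ε ≤ coverNum d (π ⁻¹' {y₀}) ε := by
  obtain ⟨U, hU, hFU, hdiam⟩ :=
    exists_cover_of_coverCards_nonempty (coverCards_nonempty hd hd0 hε (π ⁻¹' {y₀}))
  obtain ⟨V, hFV, hV, hVU⟩ := exists_subset_iUnion_closure_subset
    (isClosed_singleton.preimage hπ) hU (fun _ _ => toFinite _) hFU
  have hcover : (π '' (⋃ i, V i)ᶜ)ᶜ ∈ 𝓝 y₀ := by
    refine (hπ.isClosedMap _ (isOpen_iUnion hV).isClosed_compl).isOpen_compl.mem_nhds ?_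
    rintro ⟨x, hx, hxy⟩
    exact hx (hFV hxy)
  -- The pairs in `closure (V i)` at distance `≥ η` form a closed set missing the fibre squared,
  -- so its image under `π × π` misses a neighbourhood of `(y₀, y₀)`.
  have hsmall : ∀ i, ∃ η < ε, ∃ O ∈ 𝓝 y₀,
      ∀ x ∈ V i, ∀ x' ∈ V i, π x ∈ O → π x' ∈ O → d x x' ≤ η := by
    intro i
    obtain ⟨η, -, hlt, hηε⟩ := ENNReal.lt_iff_exists_real_btwn.1 (hdiam i)
    have hC : IsClosed (closure (V i) ×ˢ closure (V i) ∩ {p | η ≤ d p.1 p.2}) :=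
      (isClosed_closure.prod isClosed_closure).inter (isClosed_le continuous_const hd)
    have : (Prod.map π π '' (closure (V i) ×ˢ closure (V i) ∩ {p | η ≤ d p.1 p.2}))ᶜ ∈
        𝓝 y₀ ×ˢ 𝓝 y₀ := by
      rw [← nhds_prod_eq]
      refine ((hπ.prodMap hπ).isClosedMap _ hC).isOpen_compl.mem_nhds ?_
      rintro ⟨⟨x, x'⟩, ⟨⟨hx, hx'⟩, hη⟩, hxx'⟩
      simp only [Prod.map, Prod.mk.injEq] at hxx'
      exact (lt_of_setDiam_lt (A := U i ∩ π ⁻¹' {y₀}) ⟨hVU i hx, hxx'.1⟩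
        ⟨hVU i hx', hxx'.2⟩ hlt).not_ge hη
    obtain ⟨O, hO, hOO⟩ := mem_prod_self_iff.1 this
    refine ⟨η, (ENNReal.ofReal_lt_ofReal_iff'.1 hηε).1, O, hO,
      fun x hx x' hx' hxO hx'O => ?_⟩
    by_contra h
    exact hOO (mk_mem_prod hxO hx'O)
      ⟨(x, x'), ⟨⟨subset_closure hx, subset_closure hx'⟩, (not_le.1 h).le⟩, rfl⟩
  choose η hη O hO hOsmall using hsmall
  refine ⟨_, inter_mem hcover (iInter_mem.2 hO), ?_⟩
  refine (coverNum_le_card V hV (fun x hx => ?_) fun i => ?_).trans_eq (Fintype.card_fin _)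
  · by_contra h
    exact hx.1 ⟨x, h, rfl⟩
  · refine (setDiam_le_ofReal fun x hx x' hx' => ?_).trans_lt
      ((ENNReal.ofReal_lt_ofReal_iff hε).2 (hη i))
    exact hOsmall i x hx.1 x' hx'.1 (mem_iInter.1 hx.2.2 i) (mem_iInter.1 hx'.2.2 i)

lemma exists_pos_coverNum_preimage_closedBall_le [MetricSpace Y] (hd : Continuous (uncurry d))
    (hd0 : ∀ x, d x x = 0) (hε : 0 < ε) (hπ : Continuous π) :
    ∃ δ > 0, ∀ y, ∃ y', coverNum d (π ⁻¹' closedBall y δ) ε ≤ coverNum d (π ⁻¹' {y'}) ε := by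
  choose O hO hOle using exists_nhds_coverNum_preimage_le hd hd0 hε hπ
  obtain ⟨δ, hδ, hleb⟩ := lebesgue_number_lemma_of_metric (isCompact_range hπ)
    (fun y => isOpen_interior (s := O y))
    fun _ ⟨x, hx⟩ => mem_iUnion.2 ⟨π x, hx ▸ mem_interior_iff_mem_nhds.2 (hO _)⟩
  refine ⟨δ / 3, by positivity, fun y => ?_⟩
  obtain ⟨y', hy'⟩ : ∃ y', π ⁻¹' closedBall y (δ / 3) ⊆ π ⁻¹' O y' := by
    by_cases h : ∃ x, π x ∈ closedBall y (δ / 3)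
    · obtain ⟨x, hx⟩ := h
      obtain ⟨y', hy'⟩ := hleb (π x) (mem_range_self x)
      refine ⟨y', preimage_mono ((closedBall_subset_ball' ?_).trans
        (hy'.trans interior_subset))⟩
      rw [mem_closedBall, dist_comm] at hx
      linarith
    · exact ⟨y, fun x hx => (h ⟨x, hx⟩).elim⟩
  exact ⟨y', (coverNum_mono hy' (coverCards_nonempty hd hd0 hε _)).trans (hOle y')⟩

end Fiber

section DynDist

variable {X : Type*} [PseudoMetricSpace X] (T : X → X)

lemma dynDist_self (N : ℕ) (x : X) : dynDist T dist N x x = 0 := by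
  simp [dynDist]

lemma dist_iterate_le_dynDist {N n : ℕ} (hn : n < N) (x y : X) :
    dist (T^[n] x) (T^[n] y) ≤ dynDist T dist N x y :=
  le_ciSup (f := fun n : Fin N => dist (T^[n] x) (T^[n] y)) (Finite.bddAbove_range _) ⟨n, hn⟩

lemma exists_dynDist_eq {N : ℕ} (hN : 0 < N) (x y : X) :
    ∃ n < N, dynDist T dist N x y = dist (T^[n] x) (T^[n] y) := by
  have : Nonempty (Fin N) := ⟨⟨0, hN⟩⟩
  obtain ⟨n, hn⟩ := exists_eq_ciSup_of_finite (f := fun n : Fin N => dist (T^[n] x) (T^[n] y))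
  exact ⟨n, n.2, hn.symm⟩

variable {T}

lemma continuous_dynDist (hT : Continuous T) (N : ℕ) :
    Continuous (uncurry (dynDist T dist N)) := by
  rcases N.eq_zero_or_pos with rfl | hN
  · have : uncurry (dynDist T dist 0) = fun _ => 0 := funext fun _ => Real.iSup_of_isEmpty _
    rw [this]
    exact continuous_const
  have : Nonempty (Fin N) := ⟨⟨0, hN⟩⟩
  have : uncurry (dynDist T dist N) = fun p => Finset.univ.sup' Finset.univ_nonempty
      fun n : Fin N => dist (T^[n] p.1) (T^[n] p.2) := by
    funext p
    exact (Finset.sup'_univ_eq_ciSup _).symm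
  rw [this]
  exact Continuous.finset_sup'_apply _ fun n _ =>
    ((hT.iterate n).comp continuous_fst).dist ((hT.iterate n).comp continuous_snd)

end DynDist

def blockStart (m N j : ℕ) : ℕ := min (j * m) (N - m)

lemma exists_mem_block {m N n : ℕ} (hm : 0 < m) (hn : n < N) :
    ∃ j : Fin (N / m + 1), blockStart m N j ≤ n ∧ n < blockStart m N j + m := by
  refine ⟨⟨n / m, Nat.lt_succ_of_le (Nat.div_le_div_right hn.le)⟩, ?_⟩
  have h1 := Nat.div_mul_le_self n m
  have h2 := Nat.lt_div_mul_add (a := n) hm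
  simp only [blockStart]
  generalize n / m * m = k at *
  omega

section Dynamics

variable {X Y : Type*} [MetricSpace X] [CompactSpace X] [MetricSpace Y] {T : X → X} {S : Y → Y}
  {π : X → Y} {ε : ℝ}

lemma coverNum_dynDist_le_prod (hT : Continuous T) (hε : 0 < ε) {m N : ℕ} (hm : 0 < m)
    (hmN : m ≤ N) {A : Set X} {B : Fin (N / m + 1) → Set X}
    (hAB : ∀ j : Fin (N / m + 1), MapsTo T^[blockStart m N j] A (B j)) :
    coverNum (dynDist T dist N) A ε ≤ ∏ j, coverNum (dynDist T dist m) (B j) ε := by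
  refine coverNum_le_prod _ (fun j => hT.iterate _) hAB (fun x _ y _ => ?_)
    fun j => coverCards_nonempty (continuous_dynDist hT m) (dynDist_self T m) hε _
  obtain ⟨n, hn, hxy⟩ := exists_dynDist_eq T (hm.trans_le hmN) x y
  obtain ⟨j, hjn, hnj⟩ := exists_mem_block hm hn
  refine ⟨j, hxy.trans_le ?_⟩
  have := dist_iterate_le_dynDist T (N := m) (n := n - blockStart m N j) (by omega)
    (T^[blockStart m N j] x) (T^[blockStart m N j] y)
  rwa [← iterate_add_apply, ← iterate_add_apply, Nat.sub_add_cancel hjn] at this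

lemma coverNum_preimage_dynBall_le_pow (hT : Continuous T) (h : Semiconj π T S) (hε : 0 < ε)
    {m N : ℕ} (hm : 0 < m) (hmN : m ≤ N) {δ : ℝ} {M : ℕ}
    (hM : ∀ y, coverNum (dynDist T dist m) (π ⁻¹' closedBall y δ) ε ≤ M) (y : Y) :
    coverNum (dynDist T dist N) (π ⁻¹' {z | dynDist S dist N z y ≤ δ}) ε ≤
      M ^ (N / m + 1) := by
  refine (coverNum_dynDist_le_prod hT hε hm hmN
    (B := fun j => π ⁻¹' closedBall (S^[blockStart m N j] y) δ) fun j x hx => ?_).trans ?_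
  · have hj : blockStart m N j < N := by
      simp only [blockStart]
      omega
    rw [mem_preimage, mem_closedBall, (h.iterate_right _).eq]
    exact (dist_iterate_le_dynDist S hj _ _).trans hx
  · calc ∏ j : Fin (N / m + 1), coverNum (dynDist T dist m)
          (π ⁻¹' closedBall (S^[blockStart m N j] y) δ) ε
        ≤ ∏ _j : Fin (N / m + 1), M := Finset.prod_le_prod' fun j _ => hM _
      _ = M ^ (N / m + 1) := by simp

end Dynamics

def ballLogCover {X Y : Type*} [PseudoMetricSpace X] [PseudoMetricSpace Y] (T : X → X)
    (S : Y → Y) (π : X → Y) (ε δ : ℝ) (N : ℕ) : EReal :=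
  ⨆ y : Y, ((Real.log (coverNum (dynDist T dist N)
    (π ⁻¹' {z : Y | dynDist S dist N z y ≤ δ}) ε) : ℝ) : EReal)

section LogCover

variable {X Y : Type*} [MetricSpace X] [CompactSpace X] [MetricSpace Y] {T : X → X} {S : Y → Y}
  {π : X → Y} {ε : ℝ}

lemma fiberLogCover_le_ballLogCover (hT : Continuous T) (hε : 0 < ε) {δ : ℝ} (hδ : 0 ≤ δ)
    (N : ℕ) : fiberLogCover T dist π ε N ≤ ballLogCover T S π ε δ N :=
  iSup_mono fun _ => EReal.coe_le_coe_iff.2 <| log_coverNum_mono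
    (preimage_mono fun z hz => by
      rw [mem_singleton_iff.1 hz, mem_ofPred_eq, dynDist_self]
      exact hδ)
    (coverCards_nonempty (continuous_dynDist hT N) (dynDist_self T N) hε _)

lemma ballLogCover_mono (hT : Continuous T) (hε : 0 < ε) (N : ℕ) :
    Monotone fun δ => ballLogCover T S π ε δ N := fun _ _ hδ =>
  iSup_mono fun _ => EReal.coe_le_coe_iff.2 <| log_coverNum_mono
    (preimage_mono fun _ hz => le_trans hz hδ)
    (coverCards_nonempty (continuous_dynDist hT N) (dynDist_self T N) hε _)

lemma exists_ballLogCover_le [Nonempty Y] (hT : Continuous T) (h : Semiconj π T S)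
    (hπ : Continuous π) (hε : 0 < ε) {m : ℕ} (hm : 0 < m) :
    ∃ δ > 0, ∃ r : ℝ, 0 ≤ r ∧ (r : EReal) ≤ fiberLogCover T dist π ε m ∧
      ∀ N ≥ m, ballLogCover T S π ε δ N ≤ ((((N / m + 1 : ℕ) : ℝ) * r : ℝ) : EReal) := by
  obtain ⟨y₀, hy₀⟩ :=
    exists_coverNum_fiber_max (continuous_dynDist hT m) (dynDist_self T m) hε π
  obtain ⟨δ, hδ, hball⟩ := exists_pos_coverNum_preimage_closedBall_le
    (continuous_dynDist hT m) (dynDist_self T m) hε hπ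
  have hM : ∀ y, coverNum (dynDist T dist m) (π ⁻¹' closedBall y δ) ε ≤
      coverNum (dynDist T dist m) (π ⁻¹' {y₀}) ε := fun y =>
    let ⟨y', hy'⟩ := hball y
    hy'.trans (hy₀ y')
  refine ⟨δ, hδ, _, Real.log_natCast_nonneg _, le_iSup_of_le y₀ le_rfl,
    fun N hN => iSup_le fun y => EReal.coe_le_coe_iff.2 ?_⟩
  rw [← Real.log_pow, ← Nat.cast_pow]
  exact Real.log_natCast_le_log_natCast (coverNum_preimage_dynBall_le_pow hT h hε hm hN hM y)

lemma limsup_ballLogCover_le [Nonempty Y] (hT : Continuous T) (h : Semiconj π T S)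
    (hπ : Continuous π) (hε : 0 < ε) {c : ℝ} (hc : 0 < c) {m : ℕ} (hm : 0 < m) :
    limsup (fun δ => limsup (fun N : ℕ =>
        ballLogCover T S π ε δ N / ((N : EReal) * (c : EReal))) atTop) (𝓝[>] 0) ≤
      fiberLogCover T dist π ε m / ((m : EReal) * (c : EReal)) := by
  obtain ⟨δ₀, hδ₀, r, hr, hra, hbound⟩ := exists_ballLogCover_le hT h hπ hε hm
  have hq : ∀ N : ℕ, (0 : EReal) ≤ (N : EReal) * (c : EReal) := fun N => by positivity
  calc _ ≤ limsup (fun N : ℕ =>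
          ballLogCover T S π ε δ₀ N / ((N : EReal) * (c : EReal))) atTop := by
        refine limsup_le_of_le (by isBoundedDefault) ?_
        filter_upwards [Ioo_mem_nhdsGT hδ₀] with δ hδ
        exact limsup_le_limsup (Eventually.of_forall fun N =>
          EReal.div_le_div_right_of_nonneg (hq N) (ballLogCover_mono hT hε N hδ.2.le))
    _ ≤ (r : EReal) / ((m : EReal) * (c : EReal)) := limsup_div_natCast_mul_le hm hr hc hbound
    _ ≤ _ := EReal.div_le_div_right_of_nonneg (hq m) hra

theorem limsup_fiberLogCover_div_eq_limsup_ballLogCover (hT : Continuous T) (h : Semiconj π T S)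
    (hπ : Continuous π) (hε : 0 < ε) {c : ℝ} (hc : 0 < c) :
    limsup (fun N : ℕ => fiberLogCover T dist π ε N / ((N : EReal) * (c : EReal))) atTop =
      limsup (fun δ => limsup (fun N : ℕ =>
        ballLogCover T S π ε δ N / ((N : EReal) * (c : EReal))) atTop) (𝓝[>] 0) := by
  rcases isEmpty_or_nonempty Y with hY | hY
  · simp only [fiberLogCover, ballLogCover, iSup_of_empty, limsup_const]
  have hq : ∀ N : ℕ, (0 : EReal) ≤ (N : EReal) * (c : EReal) := fun N => by positivity
  refine le_antisymm ?_ ?_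
  · refine le_limsup_of_frequently_le (eventually_mem_nhdsWithin.frequently.mono
      fun δ (hδ : 0 < δ) => ?_) (by isBoundedDefault)
    exact limsup_le_limsup (Eventually.of_forall fun N =>
      EReal.div_le_div_right_of_nonneg (hq N) (fiberLogCover_le_ballLogCover hT hε hδ.le N))
  · calc _ ≤ liminf (fun m : ℕ =>
          fiberLogCover T dist π ε m / ((m : EReal) * (c : EReal))) atTop :=
          le_liminf_of_le (by isBoundedDefault) ((eventually_gt_atTop 0).mono
            fun m hm => limsup_ballLogCover_le hT h hπ hε hc hm)
      _ ≤ _ := liminf_le_limsup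

end LogCover

theorem condMetricMeanDim_eq_ball_formula_general (X Y : Type*) [MetricSpace X] [CompactSpace X]
    [MetricSpace Y] (T : X ≃ₜ X) (S : Y ≃ₜ Y) (π : X → Y)
    (hπ : Continuous π) (hequiv : ∀ x, π (T x) = S (π x)) :
    condMetricMeanDim T (fun p q => dist p q) π =
      Filter.liminf (fun ε : ℝ =>
        Filter.limsup (fun δ : ℝ =>
          Filter.limsup (fun Nn : ℕ =>
            (⨆ y : Y, ((Real.log (coverNum (dynDist T (fun p q => dist p q) Nn)
                (π ⁻¹' {z : Y | dynDist S (fun p q => dist p q) Nn z y ≤ δ}) ε) : ℝ) : EReal)) /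
              ((Nn : EReal) * ((Real.log (1 / ε) : ℝ) : EReal))) Filter.atTop)
          (𝓝[>] 0)) (𝓝[>] 0) := by
  refine liminf_congr ?_
  filter_upwards [Ioo_mem_nhdsGT one_pos] with ε ⟨hε0, hε1⟩
  exact limsup_fiberLogCover_div_eq_limsup_ballLogCover T.continuous hequiv hπ hε0
    (Real.log_pos (one_lt_one_div hε0 hε1))

/-- Formula for the lower conditional metric mean dimension in terms of preimages of
closed dynamical balls `B_δ(y, d'_N)`. -/
theorem condMetricMeanDim_eq_ball_formula (X Y : Type*) [MetricSpace X] [CompactSpace X]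
    [MetricSpace Y] [CompactSpace Y] (T : X ≃ₜ X) (S : Y ≃ₜ Y) (π : X → Y)
    (hπ : Continuous π) (hequiv : ∀ x, π (T x) = S (π x)) :
    condMetricMeanDim T (fun p q => dist p q) π =
      Filter.liminf (fun ε : ℝ =>
        Filter.limsup (fun δ : ℝ =>
          Filter.limsup (fun Nn : ℕ =>
            (⨆ y : Y, ((Real.log (coverNum (dynDist T (fun p q => dist p q) Nn)
                (π ⁻¹' {z : Y | dynDist S (fun p q => dist p q) Nn z y ≤ δ}) ε) : ℝ) : EReal)) /
              ((Nn : EReal) * ((Real.log (1 / ε) : ℝ) : EReal))) Filter.atTop)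
          (𝓝[>] 0)) (𝓝[>] 0) :=
  condMetricMeanDim_eq_ball_formula_general X Y T S π hπ hequiv
end
end

section
/- Let δ > 0 and let P be a finite simplicial complex of dimension n. For any simplicial map f : P → ℝ^{n+1} there exists a simplicial map g : P → ℝ^{n+1} such that |f(x) − g(x)| < δ for all x ∈ P, and for any pairwise disjoint simplices Δ_1, …, Δ_{n+2} of P one has g(Δ_1) ∩ ⋯ ∩ g(Δ_{n+2}) = ∅. -/
open Filter Topology Pointwise ENNReal
open scoped ENat

noncomputable section

/-!
Perturb the vertex images `f v` to `f v + u v` and extend affinely over each face. For a fixed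
family of `n + 2` pairwise disjoint faces `σᵢ`, the set of perturbations `u` for which their
images meet is closed (the barycentric weights range over a compact set) and has empty interior:
translating the `i`-th image simplex by `tᵢ` is itself a perturbation, and the translation
vectors `(tᵢ)` for which the translates share a point `x` satisfy `tᵢ ∈ x - aff(f σᵢ)`, so they
fill a set of dimension at most `(n + 1) + (n + 2) n < (n + 2) (n + 1)`. Only finitely many
families occur, so the good perturbations form a dense open set, which meets every neighbourhood
of `0`.
-/

open Finset Module Function

namespace AffineIndependent

variable {E F : Type*} [AddCommGroup E] [Module ℝ E] [AddCommGroup F] [Module ℝ F]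

theorem sum_smul_eq_of_subset {s u : Finset E} (hs : AffineIndependent ℝ ((↑) : s → E))
    (hus : u ⊆ s) {w w' : E → ℝ} (hw : ∑ v ∈ s, w v = 1) (hw' : ∑ v ∈ u, w' v = 1)
    (h : ∑ v ∈ s, w v • v = ∑ v ∈ u, w' v • v) (p : E → F) :
    ∑ v ∈ s, w v • p v = ∑ v ∈ u, w' v • p v := by
  classical
  have hsu : s ∩ u = u := Finset.inter_eq_right.mpr hus
  have hweights : ∀ v ∈ s, w v = if v ∈ u then w' v else 0 :=
    hs.eq_of_sum_eq_sum_subtype (by simp [Finset.sum_ite_mem, hsu, hw, hw'])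
      (by simp [ite_smul, Finset.sum_ite_mem, hsu, h])
  rw [Finset.sum_congr rfl fun v hv => by rw [hweights v hv]]
  simp [ite_smul, Finset.sum_ite_mem, hsu]

end AffineIndependent

namespace Geometry.SimplicialComplex

variable {E F : Type*} [AddCommGroup E] [Module ℝ E] [AddCommGroup F] [Module ℝ F]
  (K : SimplicialComplex ℝ E)

theorem mem_vertices_of_mem_faces {s : Finset E} (hs : s ∈ K.faces) {v : E} (hv : v ∈ s) :
    v ∈ K.vertices :=
  K.down_closed hs (Finset.singleton_subset_iff.mpr hv) (Finset.singleton_nonempty v)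

theorem sum_smul_eq_of_sum_smul_eq {s t : Finset E} (hs : s ∈ K.faces) (ht : t ∈ K.faces)
    {w₁ w₂ : E → ℝ} (hw₁₀ : ∀ v ∈ s, 0 ≤ w₁ v) (hw₁ : ∑ v ∈ s, w₁ v = 1)
    (hw₂₀ : ∀ v ∈ t, 0 ≤ w₂ v) (hw₂ : ∑ v ∈ t, w₂ v = 1)
    (h : ∑ v ∈ s, w₁ v • v = ∑ v ∈ t, w₂ v • v) (p : E → F) :
    ∑ v ∈ s, w₁ v • p v = ∑ v ∈ t, w₂ v • p v := by
  classical
  have hxs : ∑ v ∈ s, w₁ v • v ∈ convexHull ℝ (s : Set E) :=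
    Finset.mem_convexHull'.mpr ⟨w₁, hw₁₀, hw₁, rfl⟩
  have hxt : ∑ v ∈ s, w₁ v • v ∈ convexHull ℝ (t : Set E) :=
    Finset.mem_convexHull'.mpr ⟨w₂, hw₂₀, hw₂, h.symm⟩
  have hx := K.inter_subset_convexHull hs ht ⟨hxs, hxt⟩
  rw [← Finset.coe_inter, Finset.mem_convexHull'] at hx
  obtain ⟨w₃, -, hw₃, hx⟩ := hx
  rw [(K.indep hs).sum_smul_eq_of_subset Finset.inter_subset_left hw₁ hw₃ hx.symm,
    (K.indep ht).sum_smul_eq_of_subset Finset.inter_subset_right hw₂ hw₃ (h ▸ hx.symm)]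

open Classical in
/-- Well defined by `sum_smul_eq_of_sum_smul_eq`; the value `0` off `K.space` is arbitrary. -/
def simplicialExtension (p : E → F) (x : E) : F :=
  if h : ∃ s ∈ K.faces, ∃ w : E → ℝ, (∀ v ∈ s, 0 ≤ w v) ∧ ∑ v ∈ s, w v = 1 ∧
      ∑ v ∈ s, w v • v = x then
    ∑ v ∈ h.choose, h.choose_spec.2.choose v • p v
  else 0

theorem simplicialExtension_sum_smul (p : E → F) {s : Finset E} (hs : s ∈ K.faces)
    {w : E → ℝ} (hw₀ : ∀ v ∈ s, 0 ≤ w v) (hw : ∑ v ∈ s, w v = 1) :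
    K.simplicialExtension p (∑ v ∈ s, w v • v) = ∑ v ∈ s, w v • p v := by
  have h : ∃ t ∈ K.faces, ∃ w' : E → ℝ, (∀ v ∈ t, 0 ≤ w' v) ∧ ∑ v ∈ t, w' v = 1 ∧
      ∑ v ∈ t, w' v • v = ∑ v ∈ s, w v • v := ⟨s, hs, w, hw₀, hw, rfl⟩
  obtain ⟨hw'₀, hw', hx⟩ := h.choose_spec.2.choose_spec
  rw [simplicialExtension, dif_pos h]
  exact K.sum_smul_eq_of_sum_smul_eq h.choose_spec.1 hs hw'₀ hw' hw₀ hw hx p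

theorem simplicialExtension_of_mem_vertices (p : E → F) {v : E} (hv : v ∈ K.vertices) :
    K.simplicialExtension p v = p v := by
  simpa using K.simplicialExtension_sum_smul p hv (w := 1) (by simp) (by simp)

theorem isSimplicialMap_simplicialExtension (p : E → F) :
    IsSimplicialMap K (K.simplicialExtension p) := by
  intro s hs w hw₀ hw
  rw [K.simplicialExtension_sum_smul p hs hw₀ hw]
  refine Finset.sum_congr rfl fun v hv => ?_
  rw [K.simplicialExtension_of_mem_vertices p (K.mem_vertices_of_mem_faces hs hv)]

end Geometry.SimplicialComplex

namespace IsSimplicialMap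

variable {E F : Type*} [AddCommGroup E] [Module ℝ E] {K : Geometry.SimplicialComplex ℝ E}

theorem image_convexHull_subset [AddCommGroup F] [Module ℝ F] {g : E → F}
    (hg : IsSimplicialMap K g) {s : Finset E} (hs : s ∈ K.faces) :
    g '' convexHull ℝ (s : Set E) ⊆ convexHull ℝ (g '' s) := by
  rintro _ ⟨x, hx, rfl⟩
  obtain ⟨w, hw₀, hw, rfl⟩ := Finset.mem_convexHull'.mp hx
  rw [hg s hs w hw₀ hw]
  exact (convex_convexHull ℝ _).sum_mem hw₀ hw
    fun v hv => subset_convexHull ℝ _ (Set.mem_image_of_mem g hv)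

theorem dist_lt_of_vertices [NormedAddCommGroup F] [NormedSpace ℝ F] {f g : E → F}
    (hf : IsSimplicialMap K f) (hg : IsSimplicialMap K g) {ε : ℝ}
    (h : ∀ v ∈ K.vertices, dist (f v) (g v) < ε) {x : E} (hx : x ∈ K.space) :
    dist (f x) (g x) < ε := by
  obtain ⟨s, hs, hx⟩ := K.mem_space_iff.mp hx
  obtain ⟨w, hw₀, hw, rfl⟩ := Finset.mem_convexHull'.mp hx
  rw [hf s hs w hw₀ hw, hg s hs w hw₀ hw, dist_eq_norm, ← Finset.sum_sub_distrib,
    ← mem_ball_zero_iff]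
  simp_rw [← smul_sub]
  refine (convex_ball 0 ε).sum_mem hw₀ hw fun v hv => ?_
  rw [mem_ball_zero_iff, ← dist_eq_norm]
  exact h v (K.mem_vertices_of_mem_faces hs hv)

end IsSimplicialMap

section GeneralPosition

variable {ι κ F : Type*}

theorem convexHull_range_eq_image_stdSimplex [AddCommGroup F] [Module ℝ F] [Fintype ι]
    (z : ι → F) :
    convexHull ℝ (Set.range z) = (fun w : ι → ℝ => ∑ i, w i • z i) '' stdSimplex ℝ ι := by
  classical
  let L : (ι → ℝ) →ₗ[ℝ] F := ∑ i, (LinearMap.proj i).smulRight (z i)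
  have hz : Set.range z = L '' Set.range fun i j : ι => if i = j then (1 : ℝ) else 0 := by
    rw [← Set.range_comp]
    congr 1
    ext i
    simp [L]
  rw [hz, ← LinearMap.image_convexHull, convexHull_basis_eq_stdSimplex]
  congr 1
  ext w
  simp [L]

theorem finrank_vectorSpan_convexHull_image_le [AddCommGroup F] [Module ℝ F] (q : ι → F)
    (S : Finset ι) : finrank ℝ (vectorSpan ℝ (convexHull ℝ (q '' S))) ≤ #S - 1 := by
  classical
  rcases S.eq_empty_or_nonempty with rfl | hS
  · rw [Finset.coe_empty, Set.image_empty, convexHull_empty, vectorSpan_empty, finrank_bot]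
    exact Nat.zero_le _
  · rw [← direction_affineSpan, affineSpan_convexHull, direction_affineSpan, ← Finset.coe_image]
    exact finrank_vectorSpan_image_finset_le ℝ q S (Nat.sub_add_cancel hS.card_pos).symm

variable [NormedAddCommGroup F] [NormedSpace ℝ F]

theorem interior_setOf_iInter_vadd_nonempty_eq_empty [Fintype κ] [FiniteDimensional ℝ F]
    (P : κ → Set F)
    (hP : finrank ℝ F + ∑ i, finrank ℝ (vectorSpan ℝ (P i)) < Fintype.card κ * finrank ℝ F) :
    interior {t : κ → F | (⋂ i, t i +ᵥ P i).Nonempty} = ∅ := by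
  set T := {t : κ → F | (⋂ i, t i +ᵥ P i).Nonempty}
  refine Set.eq_empty_of_forall_notMem fun t₀ ht₀ => hP.not_ge ?_
  obtain ⟨x₀, hx₀⟩ := interior_subset ht₀
  let Φ : (F × Π i, vectorSpan ℝ (P i)) →ₗ[ℝ] κ → F := LinearMap.pi fun i =>
    LinearMap.fst ℝ _ _ - (vectorSpan ℝ (P i)).subtype ∘ₗ LinearMap.proj i ∘ₗ LinearMap.snd ℝ _ _
  have hT : T ⊆ AffineSubspace.mk' t₀ (LinearMap.range Φ) := by
    rintro t ⟨x, hx⟩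
    rw [Set.mem_iInter] at hx hx₀
    have hd : ∀ i, (-t i + x) - (-t₀ i + x₀) ∈ vectorSpan ℝ (P i) := fun i =>
      vsub_mem_vectorSpan ℝ (Set.mem_vadd_set_iff_neg_vadd_mem.mp (hx i))
        (Set.mem_vadd_set_iff_neg_vadd_mem.mp (hx₀ i))
    rw [SetLike.mem_coe, AffineSubspace.mem_mk']
    refine ⟨(x - x₀, fun i => ⟨_, hd i⟩), ?_⟩
    ext i
    simp only [Φ, LinearMap.pi_apply, LinearMap.sub_apply, LinearMap.fst_apply,
      LinearMap.coe_comp, Function.comp_apply, LinearMap.snd_apply, LinearMap.coe_proj,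
      Function.eval, Submodule.coe_subtype, vsub_eq_sub, Pi.sub_apply]
    abel
  have htop : AffineSubspace.mk' t₀ (LinearMap.range Φ) = ⊤ :=
    top_unique <| (affineSpan_eq_top_of_nonempty_interior
      ⟨t₀, interior_mono (subset_convexHull ℝ T) ht₀⟩).symm.le.trans (affineSpan_le.mpr hT)
  have hrange : LinearMap.range Φ = ⊤ := by
    rw [← AffineSubspace.direction_mk' t₀ (LinearMap.range Φ), htop, AffineSubspace.direction_top]
  calc Fintype.card κ * finrank ℝ F = finrank ℝ (κ → F) := by
        rw [Module.finrank_pi_fintype, Finset.sum_const, Finset.card_univ, smul_eq_mul]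
    _ = finrank ℝ (LinearMap.range Φ) := by rw [hrange, finrank_top]
    _ ≤ finrank ℝ (F × Π i, vectorSpan ℝ (P i)) := LinearMap.finrank_range_le Φ
    _ = _ := by rw [Module.finrank_prod, Module.finrank_pi_fintype]

theorem isClosed_setOf_iInter_convexHull_nonempty [Finite κ] (q : ι → F) (S : κ → Finset ι) :
    IsClosed {u : ι → F | (⋂ i, convexHull ℝ ((q + u) '' S i)).Nonempty} := by
  have := Fintype.ofFinite κ
  let combo : κ → (ι → F) × (Π i, stdSimplex ℝ (S i)) → F :=
    fun i p => ∑ v : S i, (p.2 i : S i → ℝ) v • (q v + p.1 v)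
  have hcombo : ∀ i, Continuous (combo i) := fun i => by
    refine continuous_finsetSum _ fun v _ => Continuous.smul ?_ (by fun_prop)
    exact (continuous_apply v).comp
      (continuous_subtype_val.comp ((continuous_apply i).comp continuous_snd))
  have hmem : ∀ u i, convexHull ℝ ((q + u) '' S i) =
      (fun w => ∑ v : S i, w v • (q v + u v)) '' stdSimplex ℝ (S i) := fun u i => by
    rw [Set.image_eq_range, convexHull_range_eq_image_stdSimplex]
    rfl
  have hfst : {u : ι → F | (⋂ i, convexHull ℝ ((q + u) '' S i)).Nonempty} =
      Prod.fst '' {p | ∀ i j, combo i p = combo j p} := by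
    ext u
    constructor
    · rintro ⟨x, hx⟩
      rw [Set.mem_iInter] at hx
      choose w hw hwx using fun i => hmem u i ▸ hx i
      exact ⟨(u, fun i => ⟨w i, hw i⟩), fun i j => (hwx i).trans (hwx j).symm, rfl⟩
    · rintro ⟨⟨u, w⟩, hw, rfl⟩
      rcases isEmpty_or_nonempty κ with hκ | ⟨⟨i₀⟩⟩
      · simp
      · exact ⟨combo i₀ (u, w), Set.mem_iInter.mpr fun i => hmem u i ▸ ⟨w i, (w i).2, hw i i₀⟩⟩
  rw [hfst]
  simp only [Set.ofPred_forall]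
  exact isClosedMap_fst_of_compactSpace _ <| isClosed_iInter fun i =>
    isClosed_iInter fun j => isClosed_eq (hcombo i) (hcombo j)

theorem interior_setOf_iInter_convexHull_nonempty_eq_empty [Fintype κ] [FiniteDimensional ℝ F]
    (q : ι → F) {S : κ → Finset ι} (hS : Pairwise (Disjoint on S))
    (hdim : finrank ℝ F + ∑ i, (#(S i) - 1) < Fintype.card κ * finrank ℝ F) :
    interior {u : ι → F | (⋂ i, convexHull ℝ ((q + u) '' S i)).Nonempty} = ∅ := by
  classical
  refine Set.eq_empty_of_forall_notMem fun u₀ hu₀ => ?_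
  let shift : (κ → F) → ι → F := fun t v => u₀ v + ∑ i, if v ∈ S i then t i else 0
  have hshift : ∀ t i, ∀ v ∈ S i, shift t v = u₀ v + t i := fun t i v hv => by
    change u₀ v + ∑ j, (if v ∈ S j then t j else 0) = u₀ v + t i
    rw [Finset.sum_eq_single i (fun j _ hji => if_neg (Finset.disjoint_left.mp (hS hji.symm) hv))
      (by simp), if_pos hv]
  have himage : ∀ t i, (q + shift t) '' S i = t i +ᵥ (q + u₀) '' S i := fun t i => by
    rw [← Set.image_vadd, Set.image_image]
    refine Set.image_congr fun v hv => ?_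
    rw [Pi.add_apply, hshift t i v hv, vadd_eq_add, Pi.add_apply]
    abel
  have hsub : shift ⁻¹' interior {u : ι → F | (⋂ i, convexHull ℝ ((q + u) '' S i)).Nonempty} ⊆
      {t : κ → F | (⋂ i, t i +ᵥ convexHull ℝ ((q + u₀) '' S i)).Nonempty} := fun t ht => by
    have h : shift t ∈ {u : ι → F | (⋂ i, convexHull ℝ ((q + u) '' S i)).Nonempty} :=
      interior_subset ht
    simpa only [Set.mem_ofPred_eq, himage, convexHull_vadd] using h
  have hcont : Continuous shift := continuous_pi fun v => continuous_const.add <|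
    continuous_finsetSum _ fun i _ =>
      continuous_if_const _ (fun _ => continuous_apply i) fun _ => continuous_const
  have hshift0 : shift 0 = u₀ := funext fun v => by simp [shift]
  have h0 := interior_maximal hsub (isOpen_interior.preimage hcont)
    (by rw [Set.mem_preimage, hshift0]; exact hu₀)
  rwa [interior_setOf_iInter_vadd_nonempty_eq_empty] at h0
  refine hdim.trans_le' ?_
  gcongr with i
  exact finrank_vectorSpan_convexHull_image_le _ _

theorem dense_setOf_forall_iInter_convexHull_eq_empty [Fintype κ] [FiniteDimensional ℝ F]
    (q : ι → F) {𝒮 : Set (κ → Finset ι)} (h𝒮 : 𝒮.Finite)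
    (hdisj : ∀ S ∈ 𝒮, Pairwise (Disjoint on S))
    (hdim : ∀ S ∈ 𝒮, finrank ℝ F + ∑ i, (#(S i) - 1) < Fintype.card κ * finrank ℝ F) :
    Dense {u : ι → F | ∀ S ∈ 𝒮, ⋂ i, convexHull ℝ ((q + u) '' S i) = ∅} := by
  have h : {u : ι → F | ∀ S ∈ 𝒮, ⋂ i, convexHull ℝ ((q + u) '' S i) = ∅} =
      ⋂ S ∈ 𝒮, {u : ι → F | (⋂ i, convexHull ℝ ((q + u) '' S i)).Nonempty}ᶜ := by
    ext u
    simp only [Set.mem_ofPred_eq, Set.mem_iInter, Set.mem_compl_iff, Set.not_nonempty_iff_eq_empty]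
  rw [h, ← Set.sInter_image]
  refine (h𝒮.image _).dense_sInter ?_ ?_ <;> rintro _ ⟨S, hS, rfl⟩
  · exact (isClosed_setOf_iInter_convexHull_nonempty q S).isOpen_compl
  · exact interior_eq_empty_iff_dense_compl.mp
      (interior_setOf_iInter_convexHull_nonempty_eq_empty q (hdisj S hS) (hdim S hS))

end GeneralPosition

theorem finrank_add_sum_card_sub_one_lt {ι : Type*} (n : ℕ) {S : Fin (n + 2) → Finset ι}
    (hS : ∀ i, #(S i) ≤ n + 1) :
    finrank ℝ (Fin (n + 1) → ℝ) + ∑ i, (#(S i) - 1) <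
      Fintype.card (Fin (n + 2)) * finrank ℝ (Fin (n + 1) → ℝ) := by
  have hsum : ∑ i, (#(S i) - 1) ≤ ∑ _i : Fin (n + 2), n :=
    Finset.sum_le_sum fun i _ => Nat.sub_le_of_le_add (hS i)
  rw [Finset.sum_const, Finset.card_univ, Fintype.card_fin, smul_eq_mul] at hsum
  rw [Module.finrank_fin_fun, Fintype.card_fin]
  nlinarith

theorem general_position_perturbation_general (n : ℕ) (δ : ℝ) (hδ : 0 < δ) {E : Type*}
    [NormedAddCommGroup E] [NormedSpace ℝ E] (K : Geometry.SimplicialComplex ℝ E)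
    (hKfin : K.faces.Finite) (hKdim : ∀ s ∈ K.faces, s.card ≤ n + 1)
    (f : E → (Fin (n + 1) → ℝ)) (hf : IsSimplicialMap K f) :
    ∃ g : E → (Fin (n + 1) → ℝ), IsSimplicialMap K g ∧
      (∀ x ∈ K.space, dist (f x) (g x) < δ) ∧
      ∀ Δ : Fin (n + 2) → Finset E, (∀ i, Δ i ∈ K.faces) →
        (∀ i j, i ≠ j → convexHull ℝ ((Δ i : Set E)) ∩ convexHull ℝ ((Δ j : Set E)) = ∅) →
        ⋂ i, g '' (convexHull ℝ ((Δ i : Set E))) = ∅ := by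
  set 𝒮 : Set (Fin (n + 2) → Finset E) := {Δ | (∀ i, Δ i ∈ K.faces) ∧ Pairwise (Disjoint on Δ)}
  have h𝒮 : 𝒮.Finite :=
    (Set.Finite.pi fun _ => hKfin).subset fun Δ hΔ => Set.mem_univ_pi.mpr hΔ.1
  have hV : K.vertices.Finite := K.vertices_eq ▸ hKfin.biUnion fun s _ => s.finite_toSet
  -- Perturbations `u : E → ℝⁿ⁺¹` carry the product topology: only their values at the finitely
  -- many vertices matter, and `δ`-smallness there is an open condition.
  obtain ⟨u, hgen, hsmall⟩ :=
    (dense_setOf_forall_iInter_convexHull_eq_empty f h𝒮 (fun _ hΔ => hΔ.2)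
      fun _ hΔ => finrank_add_sum_card_sub_one_lt n fun i => hKdim _ (hΔ.1 i)).exists_mem_open
      (isOpen_set_pi hV fun _ _ => Metric.isOpen_ball) ⟨0, fun _ _ => Metric.mem_ball_self hδ⟩
  have hg := K.isSimplicialMap_simplicialExtension (f + u)
  have hgv : ∀ v ∈ K.vertices, K.simplicialExtension (f + u) v = f v + u v :=
    fun v hv => K.simplicialExtension_of_mem_vertices _ hv
  refine ⟨_, hg, fun x hx => hf.dist_lt_of_vertices hg (fun v hv => ?_) hx, fun Δ hΔ hdisj => ?_⟩
  · rw [hgv v hv, dist_self_add_right, ← mem_ball_zero_iff]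
    exact hsmall v hv
  · have hΔ𝒮 : Δ ∈ 𝒮 := ⟨hΔ, fun i j hij => Finset.disjoint_coe.mp <|
      (Set.disjoint_iff_inter_eq_empty.mpr (hdisj i j hij)).mono
        (subset_convexHull ℝ _) (subset_convexHull ℝ _)⟩
    refine Set.subset_empty_iff.mp <| (Set.iInter_mono fun i =>
      (hg.image_convexHull_subset (hΔ i)).trans_eq ?_).trans (hgen Δ hΔ𝒮).subset
    exact congrArg _ (Set.image_congr fun v hv => hgv v (K.mem_vertices_of_mem_faces (hΔ i) hv))

/-- **General position lemma.** A simplicial map `f : P → ℝ^{n+1}` from a finite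
`n`-dimensional simplicial complex can be `δ`-perturbed to a simplicial map `g` such that the
images of any `n+2` pairwise disjoint simplices of `P` have empty intersection. -/
theorem general_position_perturbation (n : ℕ) (δ : ℝ) (hδ : 0 < δ) {E : Type*}
    [NormedAddCommGroup E] [NormedSpace ℝ E] (K : Geometry.SimplicialComplex ℝ E)
    (hKfin : K.faces.Finite) (hKdim : ∀ s ∈ K.faces, s.card ≤ n + 1)
    (hKdim' : ∃ s ∈ K.faces, s.card = n + 1)
    (f : E → (Fin (n + 1) → ℝ)) (hf : IsSimplicialMap K f) :
    ∃ g : E → (Fin (n + 1) → ℝ), IsSimplicialMap K g ∧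
      (∀ x ∈ K.space, dist (f x) (g x) < δ) ∧
      ∀ Δ : Fin (n + 2) → Finset E, (∀ i, Δ i ∈ K.faces) →
        (∀ i j, i ≠ j → convexHull ℝ ((Δ i : Set E)) ∩ convexHull ℝ ((Δ j : Set E)) = ∅) →
        ⋂ i, g '' (convexHull ℝ ((Δ i : Set E))) = ∅ :=
  general_position_perturbation_general n δ hδ K hKfin hKdim f hf
end
end
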